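/- Let a₁ > 0, H ∈ ℕ₊, m ∈ ℕ₊, P ∈ ℕ with 1 ≤ P ≤ H, and 1 ≤ n ≤ P. Define 1/α_slot(n) = n/P + 1/a₁ + (m − 1) and 1/ᾱ = 1/a₁ + (m+1). Then 1 < α_slot(n)/ᾱ ≤ Π where Π = (2a₁ + 1)/((1/H)·a₁ + 1). -/
import Mathlib


/-- Ratio bound (17-5): with `1/α_slot = n/P + 1/a₁ + (m−1)` and `1/ᾱ = 1/a₁ + (m+1)`,
`1 < α_slot/ᾱ ≤ Π` where `Π = (2a₁ + 1)/((1/H)a₁ + 1)`. -/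
theorem alpha_ratio_bound (a₁ : ℝ) (ha₁ : 0 < a₁) (H P n m : ℕ)
    (hH : 1 ≤ H) (hm : 1 ≤ m) (hP1 : 1 ≤ P) (hPH : P ≤ H) (hn1 : 1 ≤ n) (hnP : n ≤ P)
    (αslot αbar : ℝ) (hαslot : 0 < αslot) (hαbar : 0 < αbar)
    (hs : 1 / αslot = (n : ℝ) / (P : ℝ) + 1 / a₁ + ((m : ℝ) - 1))
    (hb : 1 / αbar = 1 / a₁ + ((m : ℝ) + 1)) :
    1 < αslot / αbar ∧ αslot / αbar ≤ (2 * a₁ + 1) / ((1 / (H : ℝ)) * a₁ + 1) := by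
  have hPpos : (0:ℝ) < P := by exact_mod_cast hP1
  have hHpos : (0:ℝ) < H := by exact_mod_cast hH
  have hm1 : (1:ℝ) ≤ m := by exact_mod_cast hm
  have hx1 : 1 / (H:ℝ) ≤ (n:ℝ) / P := by
    rw [div_le_div_iff₀ hHpos hPpos]
    have h1 : (1:ℝ) ≤ n := by exact_mod_cast hn1
    have h2 : (P:ℝ) ≤ H := by exact_mod_cast hPH
    nlinarith
  have hx2 : (n:ℝ) / P ≤ 1 := by
    rw [div_le_one hPpos]; exact_mod_cast hnP
  set x := (n:ℝ)/P with hxdef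
  set D := x + 1/a₁ + ((m:ℝ) - 1) with hD
  set B := 1/a₁ + ((m:ℝ) + 1) with hB
  have ha' : (0:ℝ) < 1/a₁ := by positivity
  have hH0 : (0:ℝ) < 1/(H:ℝ) := by positivity
  have hDpos : 0 < D := by rw [hD]; linarith
  have hBpos : 0 < B := by positivity
  have hαs : αslot = 1 / D := by
    field_simp at hs ⊢
    linarith [hs]
  have hαb : αbar = 1 / B := by
    field_simp at hb ⊢
    linarith [hb]
  have hratio : αslot / αbar = B / D := by
    rw [hαs, hαb]; field_simp
  rw [hratio]
  constructor
  · rw [lt_div_iff₀ hDpos]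
    rw [hD, hB]; linarith
  · rw [div_le_div_iff₀ hDpos (by positivity)]
    rw [hD, hB]
    have hHa : 1/(H:ℝ) * a₁ ≤ x * a₁ := by nlinarith
    have hia : 1/a₁ * a₁ = 1 := by field_simp
    nlinarith [mul_nonneg (sub_nonneg.mpr hm1) ha₁.le,
      mul_nonneg (mul_nonneg (sub_nonneg.mpr hm1) ha₁.le) ha₁.le,
      mul_le_of_le_one_right ha₁.le hx2, mul_pos ha₁ ha',
      mul_nonneg (mul_nonneg (sub_nonneg.mpr hm1) ha₁.le) (by positivity : (0:ℝ) ≤ 1/(H:ℝ)*a₁)]
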